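/- arXiv:1403.1016 — 10 statements merged into one kernel-verified Lean document; each statement's English description precedes it below -/
import Mathlib

section
/- Let f, g : ℝⁿ → ℝ be quadratic forms. Then the set {(f(x), g(x)) : x ∈ ℝⁿ} ⊆ ℝ² is convex. -/
/-!
Take two points `(Q u, P u)` and `(Q v, P v)` of the joint range. After a rotation of the plane
that makes the segment between them horizontal, it suffices to show: if `Q u = Q v = c`, then `P`
takes every value between `P u` and `P v` on the level set `{Q = c}`. For `c = 0` the level set is
a cone containing the rays through `u` and `v`, along which `P` runs from `0` to `P u` and `P v`.
For `c ≠ 0`, replacing `v` by `-v` if necessary so that `c * polar Q u v ≥ 0`, the chord from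
`u` to `v` stays in `{c * Q > 0}`, and rescaling it radially onto `{Q = c}` gives a path from `u`
to `v` on which `P` is continuous; the intermediate value theorem finishes.
-/

open Set

theorem Matrix.toQuadraticForm'_apply {R n : Type*} [CommRing R] [Fintype n] [DecidableEq n]
    (A : Matrix n n R) (x : n → R) : A.toQuadraticForm' x = dotProduct x (A.mulVec x) := by
  simp [Matrix.toQuadraticForm', Matrix.toLinearMap₂'_apply']

namespace QuadraticMap

section CommRing

variable {R M N : Type*} [CommRing R] [AddCommGroup M] [AddCommGroup N] [Module R M] [Module R N]

theorem map_smul_add_smul (Q : QuadraticMap R M N) (a b : R) (x y : M) :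
    Q (a • x + b • y) = (a * a) • Q x + (b * b) • Q y + (a * b) • polar Q x y := by
  rw [QuadraticMap.map_add (⇑Q), QuadraticMap.map_smul, QuadraticMap.map_smul, polar_smul_left,
    polar_smul_right, smul_smul]

end CommRing

variable {M : Type*} [AddCommGroup M] [Module ℝ M]

theorem continuous_apply_lineMap (Q : QuadraticForm ℝ M) (u v : M) :
    Continuous fun t : ℝ => Q (AffineMap.lineMap u v t) := by
  simp only [AffineMap.lineMap_apply_module, map_smul_add_smul, smul_eq_mul]
  fun_prop

theorem map_sqrt_smul (Q : QuadraticForm ℝ M) {a : ℝ} (ha : 0 ≤ a) (x : M) :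
    Q (√a • x) = a * Q x := by
  rw [QuadraticMap.map_smul, Real.mul_self_sqrt ha, smul_eq_mul]

theorem uIcc_zero_subset_image_setOf_eq_zero (Q P : QuadraticForm ℝ M) {w : M} (hw : Q w = 0) :
    uIcc 0 (P w) ⊆ P '' {z | Q z = 0} := by
  have hcont : Continuous fun t : ℝ => t * t * P w := by fun_prop
  intro r hr
  obtain ⟨t, -, rfl⟩ :=
    intermediate_value_uIcc (a := 0) (b := 1) hcont.continuousOn (by simpa using hr)
  exact ⟨t • w, by simp [QuadraticMap.map_smul, hw], by simp [QuadraticMap.map_smul]⟩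

theorem uIcc_subset_image_setOf_eq_of_mul_polar_nonneg (Q P : QuadraticForm ℝ M) {u v : M}
    {c : ℝ} (hu : Q u = c) (hv : Q v = c) (hc : c ≠ 0) (hpolar : 0 ≤ c * polar Q u v) :
    uIcc (P u) (P v) ⊆ P '' {z | Q z = c} := by
  set γ : ℝ → M := fun t => AffineMap.lineMap u v t
  have hγ : ∀ t ∈ uIcc (0 : ℝ) 1, 0 < c * Q (γ t) := by
    intro t ht
    rw [uIcc_of_le zero_le_one] at ht
    have hcross : 0 ≤ (1 - t) * t * (c * polar Q u v) :=
      mul_nonneg (mul_nonneg (sub_nonneg.2 ht.2) ht.1) hpolar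
    simp only [γ, AffineMap.lineMap_apply_module, map_smul_add_smul, smul_eq_mul, hu, hv]
    have hweights : 0 < (1 - t) * (1 - t) + t * t := by nlinarith
    nlinarith [mul_pos hweights (mul_self_pos.2 hc)]
  have hγ₀ : ∀ t ∈ uIcc (0 : ℝ) 1, Q (γ t) ≠ 0 :=
    fun t ht => right_ne_zero_of_mul (hγ t ht).ne'
  have hφ : ContinuousOn (fun t => c / Q (γ t) * P (γ t)) (uIcc 0 1) :=
    (continuousOn_const.div (continuous_apply_lineMap Q u v).continuousOn
      hγ₀).mul
      (continuous_apply_lineMap P u v).continuousOn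
  intro r hr
  obtain ⟨t, ht, rfl⟩ := intermediate_value_uIcc hφ (by simpa [γ, hu, hv, hc] using hr)
  have hratio : 0 ≤ c / Q (γ t) := by
    rw [← mul_div_mul_right c _ (hγ₀ t ht)]
    exact div_nonneg (hγ t ht).le (mul_self_nonneg _)
  refine ⟨√(c / Q (γ t)) • γ t, ?_, map_sqrt_smul P hratio _⟩
  rw [mem_ofPred_eq, map_sqrt_smul Q hratio, div_mul_cancel₀ _ (hγ₀ t ht)]

theorem uIcc_subset_image_setOf_eq (Q P : QuadraticForm ℝ M) {u v : M} (huv : Q u = Q v) :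
    uIcc (P u) (P v) ⊆ P '' {z | Q z = Q u} := by
  rcases eq_or_ne (Q u) 0 with hc | hc
  · rw [hc]
    refine (uIcc_subset_uIcc_union_uIcc (b := 0)).trans (union_subset ?_ ?_)
    · rw [uIcc_comm]
      exact uIcc_zero_subset_image_setOf_eq_zero Q P hc
    · exact uIcc_zero_subset_image_setOf_eq_zero Q P (huv ▸ hc)
  rcases le_total 0 (Q u * polar Q u v) with h | h
  · exact uIcc_subset_image_setOf_eq_of_mul_polar_nonneg Q P rfl huv.symm hc h
  · simpa using uIcc_subset_image_setOf_eq_of_mul_polar_nonneg Q P (v := -v) rfl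
      (by rw [QuadraticMap.map_neg, huv]) hc (by rw [polar_neg_right]; linarith)

theorem convex_range_prodMk (Q P : QuadraticForm ℝ M) :
    Convex ℝ (range fun x => (Q x, P x)) := by
  rintro _ ⟨u, rfl⟩ _ ⟨v, rfl⟩ s t hs ht hst
  obtain rfl : t = 1 - s := by linarith
  set a := Q v - Q u
  set b := P v - P u
  by_cases hab : a = 0 ∧ b = 0
  · refine ⟨u, Prod.ext ?_ ?_⟩
    · simp only [smul_eq_mul, Prod.fst_add, Prod.smul_fst]
      linear_combination -(1 - s) * hab.1
    · simp only [smul_eq_mul, Prod.snd_add, Prod.smul_snd]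
      linear_combination -(1 - s) * hab.2
  have hab2 : a ^ 2 + b ^ 2 ≠ 0 := by
    rcases not_and_or.1 hab with h | h <;> positivity
  set Q' := b • Q - a • P
  set P' := a • Q + b • P
  have hQ' : Q' u = Q' v := by
    simp only [Q', _root_.sub_apply, _root_.smul_apply, smul_eq_mul, a, b]; ring
  have hr : s * P' u + (1 - s) * P' v ∈ uIcc (P' u) (P' v) :=
    segment_eq_uIcc (P' u) (P' v) ▸ ⟨s, 1 - s, hs, ht, hst, rfl⟩
  obtain ⟨z, hzQ : Q' z = Q' u, hzP⟩ := uIcc_subset_image_setOf_eq Q' P' hQ' hr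
  simp only [Q', P', _root_.sub_apply, _root_.add_apply, _root_.smul_apply, smul_eq_mul] at hzQ hzP
  refine ⟨z, Prod.ext ?_ ?_⟩
  · simp only [smul_eq_mul, Prod.fst_add, Prod.smul_fst]
    apply mul_left_cancel₀ hab2
    linear_combination b * hzQ + a * hzP
  · simp only [smul_eq_mul, Prod.snd_add, Prod.smul_snd]
    apply mul_left_cancel₀ hab2
    linear_combination -a * hzQ + b * hzP

end QuadraticMap

theorem dines_convexity_general (n : ℕ) (f g : (Fin n → ℝ) → ℝ)
    (A B : Matrix (Fin n) (Fin n) ℝ)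
    (hf : ∀ x, f x = dotProduct x (A.mulVec x))
    (hg : ∀ x, g x = dotProduct x (B.mulVec x)) :
    Convex ℝ {p : ℝ × ℝ | ∃ x : Fin n → ℝ, p = (f x, g x)} := by
  convert QuadraticMap.convex_range_prodMk A.toQuadraticForm' B.toQuadraticForm' using 1
  ext p
  simp [Matrix.toQuadraticForm'_apply, hf, hg, eq_comm]

theorem dines_convexity (n : ℕ) (f g : (Fin n → ℝ) → ℝ)
    (A B : Matrix (Fin n) (Fin n) ℝ) (hA : A.IsSymm) (hB : B.IsSymm)
    (hf : ∀ x, f x = dotProduct x (A.mulVec x))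
    (hg : ∀ x, g x = dotProduct x (B.mulVec x)) :
    Convex ℝ {p : ℝ × ℝ | ∃ x : Fin n → ℝ, p = (f x, g x)} :=
  dines_convexity_general n f g A B hf hg
end

section
/- Let f, g : ℝⁿ → ℝ be continuous functions, homogeneous of degree k > 0 with respect to the same dilation (r₁,…,rₙ) with all rᵢ > 0, and suppose f and g have no common zero except 0 ∈ ℝⁿ. Then the set {(f(x), g(x)) : x ∈ ℝⁿ} is closed in ℝ². -/
/-!
Every nonzero `x` is a dilate of a point of the unit sphere, and dilating by `ε` multiplies
`q = (f, g)` by `ε ^ k`, which sweeps out `(0, ∞)` because `k > 0`. Hence the image of `q` is `0`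
together with the cone `{t • q y | t ≥ 0, ‖y‖ = 1}`. As `q` has no zero on the compact sphere,
`q '' sphere 0 1` is a compact set avoiding the origin, and the cone over such a set is closed.
-/

open Set Metric
open scoped Pointwise

variable {ι : Type*}

noncomputable def dilate (r : ι → ℝ) (ε : ℝ) (x : ι → ℝ) : ι → ℝ := fun i => ε ^ r i * x i

lemma dilate_zero_right (r : ι → ℝ) (ε : ℝ) : dilate r ε 0 = 0 := by
  ext i; simp [dilate]

lemma dilate_zero_left {r : ι → ℝ} (hr : ∀ i, r i ≠ 0) (x : ι → ℝ) : dilate r 0 x = 0 := by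
  ext i; simp [dilate, Real.zero_rpow (hr i)]

lemma continuous_dilate_left {r : ι → ℝ} (hr : ∀ i, 0 ≤ r i) (x : ι → ℝ) :
    Continuous fun ε => dilate r ε x :=
  continuous_pi fun i => (Real.continuous_rpow_const (hr i)).mul continuous_const

lemma exists_pos_norm_dilate_eq_one [Fintype ι] {r : ι → ℝ} (hr : ∀ i, 0 < r i) {x : ι → ℝ}
    (hx : x ≠ 0) : ∃ ε, 0 < ε ∧ ‖dilate r ε x‖ = 1 := by
  obtain ⟨i, hi⟩ := Function.ne_iff.1 hx
  set b := |x i| ^ (-(r i)⁻¹)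
  have hb_norm : 1 ≤ ‖dilate r b x‖ := calc
    (1 : ℝ) = ‖b ^ r i * x i‖ := by
      rw [norm_mul, Real.norm_eq_abs, Real.norm_eq_abs, abs_of_nonneg (by positivity),
        ← Real.rpow_mul (abs_nonneg _), neg_mul, inv_mul_cancel₀ (hr i).ne', Real.rpow_neg_one,
        inv_mul_cancel₀ (abs_ne_zero.2 hi)]
    _ ≤ ‖dilate r b x‖ := norm_le_pi_norm (dilate r b x) i
  have h0 : ‖dilate r 0 x‖ = 0 := by rw [dilate_zero_left fun i => (hr i).ne', norm_zero]
  obtain ⟨ε, hε_mem, hε⟩ := intermediate_value_Icc (by positivity : 0 ≤ b)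
    (continuous_dilate_left (fun i => (hr i).le) x).norm.continuousOn
    ⟨h0.symm ▸ zero_le_one, hb_norm⟩
  refine ⟨ε, hε_mem.1.lt_of_ne ?_, hε⟩
  rintro rfl
  simp [h0] at hε

section Homogeneous

variable {E : Type*} [AddCommGroup E] [Module ℝ E] {q : (ι → ℝ) → E} {r : ι → ℝ} {k : ℝ}

lemma map_zero_of_homogeneous (hk : k ≠ 0)
    (hq : ∀ ε, 0 < ε → ∀ x, q (dilate r ε x) = ε ^ k • q x) : q 0 = 0 := by
  have h := hq 2 two_pos 0
  rw [dilate_zero_right] at h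
  have h' : ((2 : ℝ) ^ k - 1) • q 0 = 0 := by rw [sub_smul, one_smul, ← h, sub_self]
  have h2 : (2 : ℝ) ^ k - 1 ≠ 0 := sub_ne_zero.2 fun h1 =>
    hk ((Real.rpow_right_inj two_pos (by norm_num)).1 (h1.trans (Real.rpow_zero 2).symm))
  exact (smul_eq_zero.1 h').resolve_left h2

lemma range_eq_insert_zero_Ici_smul_image_sphere [Fintype ι] (hr : ∀ i, 0 < r i) (hk : 0 < k)
    (hq : ∀ ε, 0 < ε → ∀ x, q (dilate r ε x) = ε ^ k • q x) :
    range q = insert 0 (Ici (0 : ℝ) • q '' sphere 0 1) := by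
  have hq0 := map_zero_of_homogeneous hk.ne' hq
  apply Subset.antisymm
  · rintro _ ⟨x, rfl⟩
    rcases eq_or_ne x 0 with rfl | hx
    · exact Or.inl hq0
    obtain ⟨ε, hε, hnorm⟩ := exists_pos_norm_dilate_eq_one hr hx
    have hεk : 0 < ε ^ k := Real.rpow_pos_of_pos hε k
    refine Or.inr ⟨(ε ^ k)⁻¹, (inv_pos.2 hεk).le, _,
      ⟨dilate r ε x, mem_sphere_zero_iff_norm.2 hnorm, rfl⟩, ?_⟩
    exact (congrArg _ (hq ε hε x)).trans (inv_smul_smul₀ hεk.ne' _)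
  · rintro _ (rfl | ⟨t, ht, _, ⟨y, -, rfl⟩, rfl⟩)
    · exact ⟨0, hq0⟩
    rcases (mem_Ici.1 ht).eq_or_lt with rfl | ht
    · exact ⟨0, hq0.trans (zero_smul ℝ _).symm⟩
    refine ⟨dilate r (t ^ k⁻¹) y, ?_⟩
    rw [hq _ (by positivity), ← Real.rpow_mul ht.le, inv_mul_cancel₀ hk.ne', Real.rpow_one]

end Homogeneous

section Cone

variable {E : Type*} [NormedAddCommGroup E] [NormedSpace ℝ E] {K : Set E}

lemma Ici_smul_inter_closedBall_subset {a : ℝ} (ha : 0 < a) (hK : ∀ v ∈ K, a ≤ ‖v‖) (R : ℝ) :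
    Ici (0 : ℝ) • K ∩ closedBall 0 R ⊆ Icc 0 (R / a) • K := by
  rintro _ ⟨⟨t, ht, v, hv, rfl⟩, hR⟩
  refine ⟨t, ⟨ht, ?_⟩, v, hv, rfl⟩
  rw [le_div_iff₀ ha]
  calc t * a ≤ t * ‖v‖ := mul_le_mul_of_nonneg_left (hK v hv) ht
    _ = ‖t • v‖ := by rw [norm_smul, Real.norm_of_nonneg ht]
    _ ≤ R := mem_closedBall_zero_iff.1 hR

/-- Near any point the cone agrees with the compact set `Icc 0 (R / a) • K`, where `a > 0`
bounds the norm from below on `K`. -/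
lemma IsCompact.isClosed_Ici_smul (hK : IsCompact K) (h0 : (0 : E) ∉ K) :
    IsClosed (Ici (0 : ℝ) • K) := by
  obtain ⟨a, ha, hball⟩ := Metric.isOpen_iff.1 hK.isClosed.isOpen_compl 0 h0
  have hK_norm : ∀ v ∈ K, a ≤ ‖v‖ := fun v hv =>
    not_lt.1 fun h => hball (mem_ball_zero_iff.2 h) hv
  rw [← closure_subset_iff_isClosed]
  intro p hp
  set R := ‖p‖ + 1
  have hp_local : p ∈ closure (Ici (0 : ℝ) • K ∩ ball 0 R) := by
    rw [inter_comm]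
    exact isOpen_ball.inter_closure ⟨mem_ball_zero_iff.2 (lt_add_one _), hp⟩
  have hsub : Ici (0 : ℝ) • K ∩ ball 0 R ⊆ Icc 0 (R / a) • K :=
    (inter_subset_inter_right _ ball_subset_closedBall).trans
      (Ici_smul_inter_closedBall_subset ha hK_norm R)
  exact smul_subset_smul_right Icc_subset_Ici_self
    (closure_minimal hsub (isCompact_Icc.smul_set hK).isClosed hp_local)

end Cone

theorem homogeneous_image_closed (n : ℕ) (f g : (Fin n → ℝ) → ℝ)
    (r : Fin n → ℝ) (hr : ∀ i, 0 < r i) (k : ℝ) (hk : 0 < k)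
    (hfc : Continuous f) (hgc : Continuous g)
    (hfhom : ∀ ε : ℝ, 0 < ε → ∀ x : Fin n → ℝ,
      f (fun i => ε ^ (r i) * x i) = ε ^ k * f x)
    (hghom : ∀ ε : ℝ, 0 < ε → ∀ x : Fin n → ℝ,
      g (fun i => ε ^ (r i) * x i) = ε ^ k * g x)
    (hzero : ∀ x : Fin n → ℝ, f x = 0 → g x = 0 → x = 0) :
    IsClosed {p : ℝ × ℝ | ∃ x : Fin n → ℝ, p = (f x, g x)} := by
  set q : (Fin n → ℝ) → ℝ × ℝ := fun x => (f x, g x)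
  have hq : ∀ ε, 0 < ε → ∀ x, q (dilate r ε x) = ε ^ k • q x := fun ε hε x =>
    Prod.ext (hfhom ε hε x) (hghom ε hε x)
  have hq_ne : (0 : ℝ × ℝ) ∉ q '' sphere 0 1 := by
    rintro ⟨y, hy, hqy⟩
    have := hzero y (congrArg Prod.fst hqy) (congrArg Prod.snd hqy)
    simp [this] at hy
  have hrange : {p : ℝ × ℝ | ∃ x, p = q x} = range q := by
    ext p; exact exists_congr fun x => eq_comm
  rw [hrange, range_eq_insert_zero_Ici_smul_image_sphere hr hk hq, insert_eq]
  exact isClosed_singleton.union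
    (((isCompact_sphere 0 1).image (hfc.prodMk hgc)).isClosed_Ici_smul hq_ne)
end

section
/- Let f, g : ℝⁿ → ℝ be continuous odd functions, homogeneous of degree k > 0 with respect to the same dilation (r₁,…,rₙ), having no common zero except 0 ∈ ℝⁿ. Then the set U = {(f(x), g(x)) : x ∈ ℝⁿ} is convex; more precisely, U either equals all of ℝ² or is a straight line through the origin. -/
lemma line_set_convex (a b : ℝ) :
    Convex ℝ {p : ℝ × ℝ | ∃ t : ℝ, p = (t * a, t * b)} := by
  rintro p ⟨t1, rfl⟩ q ⟨t2, rfl⟩ s u hs hu hsu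
  refine ⟨s * t1 + u * t2, ?_⟩
  simp only [Prod.smul_mk, smul_eq_mul, Prod.mk_add_mk, Prod.mk.injEq]
  constructor <;> ring

theorem odd_homogeneous_image_convex (n : ℕ) (f g : (Fin n → ℝ) → ℝ)
    (r : Fin n → ℝ) (hr : ∀ i, 0 < r i) (k : ℝ) (hk : 0 < k)
    (hfc : Continuous f) (hgc : Continuous g)
    (hfodd : ∀ x : Fin n → ℝ, f (-x) = -f x)
    (hgodd : ∀ x : Fin n → ℝ, g (-x) = -g x)
    (hfhom : ∀ ε : ℝ, 0 < ε → ∀ x : Fin n → ℝ,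
      f (fun i => ε ^ (r i) * x i) = ε ^ k * f x)
    (hghom : ∀ ε : ℝ, 0 < ε → ∀ x : Fin n → ℝ,
      g (fun i => ε ^ (r i) * x i) = ε ^ k * g x)
    (hzero : ∀ x : Fin n → ℝ, f x = 0 → g x = 0 → x = 0) :
    Convex ℝ {p : ℝ × ℝ | ∃ x : Fin n → ℝ, p = (f x, g x)} ∧
      ({p : ℝ × ℝ | ∃ x : Fin n → ℝ, p = (f x, g x)} = Set.univ ∨
       ∃ a b : ℝ, {p : ℝ × ℝ | ∃ x : Fin n → ℝ, p = (f x, g x)} =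
         {p : ℝ × ℝ | ∃ t : ℝ, p = (t * a, t * b)}) := by
  have hf0 : f 0 = 0 := by have := hfodd 0; rw [neg_zero] at this; linarith
  have hg0 : g 0 = 0 := by have := hgodd 0; rw [neg_zero] at this; linarith
  -- scaling lemma
  have hscale : ∀ t : ℝ, ∀ y : Fin n → ℝ, ∃ x, f x = t * f y ∧ g x = t * g y := by
    have pos : ∀ t : ℝ, 0 < t → ∀ y : Fin n → ℝ,
        ∃ x, f x = t * f y ∧ g x = t * g y := by
      intro t ht y
      have hε : (0:ℝ) < t ^ (1/k) := Real.rpow_pos_of_pos ht _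
      have hek : (t ^ (1/k)) ^ k = t := by
        rw [← Real.rpow_mul ht.le, one_div_mul_cancel hk.ne', Real.rpow_one]
      exact ⟨fun i => (t ^ (1/k)) ^ (r i) * y i,
        by rw [hfhom _ hε, hek], by rw [hghom _ hε, hek]⟩
    intro t y
    rcases lt_trichotomy t 0 with ht | ht | ht
    · obtain ⟨x, h1, h2⟩ := pos (-t) (by linarith) (-y)
      rw [hfodd] at h1; rw [hgodd] at h2
      exact ⟨x, by rw [h1]; ring, by rw [h2]; ring⟩
    · exact ⟨0, by rw [hf0, ht, zero_mul], by rw [hg0, ht, zero_mul]⟩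
    · exact pos t ht y
  by_cases h2 : 2 ≤ n
  · -- n ≥ 2 : the image is all of ℝ²
    have hrank : 1 < Module.rank ℝ (Fin n → ℝ) := by
      rw [rank_fin_fun]
      exact_mod_cast Nat.one_lt_cast.mpr (by omega)
    have hconn := isConnected_compl_singleton_of_one_lt_rank hrank (0 : Fin n → ℝ)
    have huniv : {p : ℝ × ℝ | ∃ x : Fin n → ℝ, p = (f x, g x)} = Set.univ := by
      ext p
      simp only [Set.mem_univ, iff_true, Set.mem_setOf_eq]
      obtain ⟨u, v⟩ := p
      set φ : (Fin n → ℝ) → ℝ := fun x => v * f x - u * g x with hφ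
      have hφc : Continuous φ := (continuous_const.mul hfc).sub (continuous_const.mul hgc)
      set x₀ : Fin n → ℝ := fun _ => 1 with hx₀def
      have hn0 : (0:ℕ) < n := by omega
      have hx₀ : x₀ ≠ 0 := by
        intro h
        have := congrFun h ⟨0, hn0⟩
        simp [hx₀def] at this
      have hx₀' : -x₀ ≠ 0 := neg_ne_zero.mpr hx₀
      have hφodd : φ (-x₀) = -φ x₀ := by
        simp only [hφ, hfodd, hgodd]; ring
      have hmem : (0:ℝ) ∈ φ '' ({0}ᶜ : Set (Fin n → ℝ)) := by
        rcases le_total (φ x₀) 0 with h | h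
        · exact IsPreconnected.intermediate_value hconn.isPreconnected
            (Set.mem_compl_singleton_iff.mpr hx₀)
            (Set.mem_compl_singleton_iff.mpr hx₀') hφc.continuousOn
            ⟨h, by rw [hφodd]; linarith⟩
        · exact IsPreconnected.intermediate_value hconn.isPreconnected
            (Set.mem_compl_singleton_iff.mpr hx₀')
            (Set.mem_compl_singleton_iff.mpr hx₀) hφc.continuousOn
            ⟨by rw [hφodd]; linarith, h⟩
      obtain ⟨y, hy0, hφy⟩ := hmem
      have hy0' : y ≠ 0 := Set.mem_compl_singleton_iff.mp hy0
      have hcross : v * f y = u * g y := by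
        have : v * f y - u * g y = 0 := hφy
        linarith
      have hne : ¬ (f y = 0 ∧ g y = 0) := by
        rintro ⟨h1, h2⟩; exact hy0' (hzero y h1 h2)
      have hts : ∃ t : ℝ, t * f y = u ∧ t * g y = v := by
        by_cases hfy : f y = 0
        · have hgy : g y ≠ 0 := fun h => hne ⟨hfy, h⟩
          have hu : u = 0 := by
            have := hcross
            rw [hfy, mul_zero] at this
            rcases mul_eq_zero.mp this.symm with h | h
            · exact h
            · exact absurd h hgy
          exact ⟨v / g y, by rw [hfy, mul_zero, hu], div_mul_cancel₀ v hgy⟩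
        · refine ⟨u / f y, div_mul_cancel₀ u hfy, ?_⟩
          field_simp
          linarith
      obtain ⟨t, ht1, ht2⟩ := hts
      obtain ⟨x, h1, h2⟩ := hscale t y
      exact ⟨x, by rw [h1, h2, ht1, ht2]⟩
    exact ⟨huniv ▸ convex_univ, Or.inl huniv⟩
  · -- n = 0 or n = 1
    interval_cases n
    · -- n = 0
      have hline : {p : ℝ × ℝ | ∃ x : Fin 0 → ℝ, p = (f x, g x)} =
          {p : ℝ × ℝ | ∃ t : ℝ, p = (t * 0, t * 0)} := by
        ext p
        simp only [Set.mem_setOf_eq]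
        constructor
        · rintro ⟨x, rfl⟩
          have hx : x = 0 := funext fun i => i.elim0
          exact ⟨0, by rw [hx, hf0, hg0]; norm_num⟩
        · rintro ⟨t, rfl⟩
          exact ⟨0, by rw [hf0, hg0]; norm_num⟩
      exact ⟨hline ▸ line_set_convex 0 0, Or.inr ⟨0, 0, hline⟩⟩
    · -- n = 1
      set c : ℝ := f (fun _ => 1) with hc
      set d : ℝ := g (fun _ => 1) with hd
      have hline : {p : ℝ × ℝ | ∃ x : Fin 1 → ℝ, p = (f x, g x)} =
          {p : ℝ × ℝ | ∃ t : ℝ, p = (t * c, t * d)} := by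
        ext p
        simp only [Set.mem_setOf_eq]
        constructor
        · rintro ⟨x, rfl⟩
          -- every x : Fin 1 → ℝ is a scaled version of (fun _ => 1)
          have hxeq : ∀ z : Fin 1 → ℝ, 0 < z 0 →
              ∃ t : ℝ, f z = t * c ∧ g z = t * d := by
            intro z hz
            set ε : ℝ := (z 0) ^ (1 / r 0) with hε
            have hεpos : 0 < ε := Real.rpow_pos_of_pos hz _
            have key : z = fun i => ε ^ (r i) * (fun _ : Fin 1 => (1:ℝ)) i := by
              funext i
              have hi : i = 0 := Subsingleton.elim i 0
              subst hi
              rw [mul_one, hε, ← Real.rpow_mul hz.le,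
                one_div_mul_cancel (hr 0).ne', Real.rpow_one]
            refine ⟨ε ^ k, ?_, ?_⟩
            · rw [show f z = f (fun i => ε ^ (r i) * (fun _ : Fin 1 => (1:ℝ)) i) from
                congrArg f key]
              exact hfhom ε hεpos _
            · rw [show g z = g (fun i => ε ^ (r i) * (fun _ : Fin 1 => (1:ℝ)) i) from
                congrArg g key]
              exact hghom ε hεpos _
          rcases lt_trichotomy (x 0) 0 with hx0 | hx0 | hx0
          · obtain ⟨t, h1, h2⟩ := hxeq (-x) (by simp only [Pi.neg_apply]; linarith)
            rw [hfodd] at h1; rw [hgodd] at h2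
            exact ⟨-t, by rw [Prod.mk.injEq]; constructor <;> linarith⟩
          · have hx : x = 0 := by
              funext i
              have hi : i = 0 := Subsingleton.elim i 0
              rw [hi]; exact hx0
            exact ⟨0, by rw [hx, hf0, hg0]; norm_num⟩
          · obtain ⟨t, h1, h2⟩ := hxeq x hx0
            exact ⟨t, by rw [h1, h2]⟩
        · rintro ⟨t, rfl⟩
          obtain ⟨x, h1, h2⟩ := hscale t (fun _ => 1)
          exact ⟨x, by rw [h1, h2, hc, hd]⟩
      exact ⟨hline ▸ line_set_convex c d, Or.inr ⟨c, d, hline⟩⟩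
end

section
/- The set U = {(−x³ + y³, y³ − x³/2 − x·y²/2) : x, y ∈ ℝ} ⊆ ℝ² is not convex. Specifically (1,1) ∈ U and (−1,−1/2) ∈ U but their midpoint (0, 1/4) ∉ U. -/
theorem cubic_image_not_convex :
    let U : Set (ℝ × ℝ) :=
      {p | ∃ x y : ℝ, p = (-x ^ 3 + y ^ 3, y ^ 3 - x ^ 3 / 2 - x * y ^ 2 / 2)}
    ¬ Convex ℝ U ∧ (1, 1) ∈ U ∧ ((-1 : ℝ), (-1 / 2 : ℝ)) ∈ U ∧
      ((0 : ℝ), (1 / 4 : ℝ)) ∉ U := by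
  intro U
  have h1 : ((1 : ℝ), (1 : ℝ)) ∈ U := ⟨0, 1, by norm_num⟩
  have h2 : ((-1 : ℝ), (-1 / 2 : ℝ)) ∈ U := ⟨1, 0, by norm_num⟩
  have h3 : ((0 : ℝ), (1 / 4 : ℝ)) ∉ U := by
    rintro ⟨x, y, h⟩
    have e1 : -x ^ 3 + y ^ 3 = 0 := by
      have := congrArg Prod.fst h; simpa using this.symm
    have e2 : y ^ 3 - x ^ 3 / 2 - x * y ^ 2 / 2 = 1 / 4 := by
      have := congrArg Prod.snd h; simpa using this.symm
    have hyx : y = x := by nlinarith [sq_nonneg (y - x), sq_nonneg (y + x), sq_nonneg x, sq_nonneg y]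
    rw [hyx] at e2; nlinarith [e1, e2]
  refine ⟨?_, h1, h2, h3⟩
  intro hc
  have := hc h1 h2 (by norm_num : (0:ℝ) ≤ (1/2:ℝ)) (by norm_num : (0:ℝ) ≤ (1/2:ℝ)) (by norm_num)
  apply h3
  convert this using 2 <;> norm_num
end

section
/- Let f, g : ℝⁿ → ℝ be continuous even functions homogeneous of the same degree k > 0 with respect to the same dilation (r₁,…,rₙ). Suppose f is strictly copositive with g (g(x) ≥ 0 and x ≠ 0 imply f(x) > 0) and suppose there exist a, b ∈ ℝ with a² + b² > 0 such that neither the system {f(x) = a, g(x) = b} nor the system {f(x) = −a, g(x) = −b} has a solution x ∈ ℝⁿ. Then there exists ξ > 0 such that f(x) − ξ·g(x) > 0 for all nonzero x ∈ ℝⁿ. -/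
/-!
Put `H = b f - a g`. If `H x = 0` with `x ≠ 0`, then `(f x, g x) = t (a, b)` with `t ≠ 0` by
copositivity, and dilating `x` by `|t|^(-1/k)` solves one of the two excluded systems. So `H` has
no zero off the origin and, being even and continuous, has constant sign there (for `x, y ≠ 0` one
of the segments `[x, y]`, `[x, -y]` avoids `0`). If `f > 0` or `g < 0` off the origin, `ξ` is found
by compactness on the unit sphere of the gauge `∑ |xᵢ| ^ (1 / rᵢ)`, which meets every dilation
orbit. Otherwise, by the same intermediate value argument, `f u = 0 > g u` and `g v = 0 < f v` for
some nonzero `u, v`; the signs of `H u = -a g u` and `H v = b f v` agree, so `a b > 0`, and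
`ξ = a / b` works because `f - (a / b) g = H / b`.
-/

open Set Filter Topology

section Segment

variable {E : Type*} [AddCommGroup E] [Module ℝ E]

lemma zero_notMem_segment_or_neg {x y : E} (hx : x ≠ 0) (hy : y ≠ 0) :
    (0 : E) ∉ segment ℝ x y ∨ (0 : E) ∉ segment ℝ x (-y) := by
  by_contra! h
  obtain ⟨h₁, h₂⟩ := h
  rw [mem_segment_iff_sameRay, zero_sub, sub_zero] at h₁ h₂
  have hxy : SameRay ℝ y x := (sameRay_neg_iff.mp h₂).symm
  exact hx (eq_zero_of_sameRay_self_neg (h₁.trans hxy fun h => absurd h hy).symm)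

variable [TopologicalSpace E] [ContinuousAdd E] [ContinuousSMul ℝ E]

lemma exists_ne_zero_eq_zero_of_even {F : E → ℝ} (hF : Continuous F)
    (heven : ∀ x, F (-x) = F x) {x y : E} (hx : x ≠ 0) (hy : y ≠ 0)
    (hFx : F x ≤ 0) (hFy : 0 ≤ F y) : ∃ z ≠ 0, F z = 0 := by
  have key : ∀ w, (0 : E) ∉ segment ℝ x w → 0 ≤ F w → ∃ z ≠ 0, F z = 0 := by
    intro w hw hFw
    obtain ⟨z, hz, hFz⟩ := (convex_segment x w).isPreconnected.intermediate_value
      (left_mem_segment ℝ x w) (right_mem_segment ℝ x w) hF.continuousOn ⟨hFx, hFw⟩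
    exact ⟨z, ne_of_mem_of_not_mem hz hw, hFz⟩
  rcases zero_notMem_segment_or_neg hx hy with h | h
  · exact key y h hFy
  · exact key (-y) h (by rwa [heven])

lemma mul_pos_of_even_of_ne_zero {F : E → ℝ} (hF : Continuous F)
    (heven : ∀ x, F (-x) = F x) (hne : ∀ x ≠ 0, F x ≠ 0) {x y : E} (hx : x ≠ 0)
    (hy : y ≠ 0) : 0 < F x * F y := by
  rcases (hne x hx).lt_or_gt with hFx | hFx <;> rcases (hne y hy).lt_or_gt with hFy | hFy
  · exact mul_pos_of_neg_of_neg hFx hFy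
  · obtain ⟨z, hz, hFz⟩ := exists_ne_zero_eq_zero_of_even hF heven hx hy hFx.le hFy.le
    exact absurd hFz (hne z hz)
  · obtain ⟨z, hz, hFz⟩ := exists_ne_zero_eq_zero_of_even hF heven hy hx hFy.le hFx.le
    exact absurd hFz (hne z hz)
  · exact mul_pos hFx hFy

end Segment

lemma IsCompact.exists_pos_forall_sub_mul_pos {X : Type*} [TopologicalSpace X] {K : Set X}
    (hK : IsCompact K) {u v : X → ℝ} (hu : Continuous u) (hv : Continuous v)
    (hpos : ∀ x ∈ K, 0 < u x) : ∃ ξ > 0, ∀ x ∈ K, 0 < u x - ξ * v x := by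
  have hcont : Continuous fun p : ℝ × X => u p.2 - p.1 * v p.2 := by fun_prop
  have hsmall : ∀ᶠ ξ in 𝓝 (0 : ℝ), ∀ x ∈ K, 0 < u x - ξ * v x :=
    hK.eventually_forall_of_forall_eventually fun x hx =>
      hcont.continuousAt.eventually (eventually_gt_nhds (by simpa using hpos x hx))
  exact (eventually_mem_nhdsWithin.and (hsmall.filter_mono nhdsWithin_le_nhds) :
    ∀ᶠ ξ in 𝓝[>] (0 : ℝ), ξ ∈ Ioi 0 ∧ _).exists

lemma exists_eq_mul_of_mul_sub_mul_eq_zero {a b u v : ℝ} (hab : a ^ 2 + b ^ 2 ≠ 0)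
    (h : b * u - a * v = 0) : ∃ t, u = t * a ∧ v = t * b :=
  ⟨(a * u + b * v) / (a ^ 2 + b ^ 2), by field_simp; linear_combination b * h,
    by field_simp; linear_combination -a * h⟩

namespace Dilation

variable {ι : Type*} {r : ι → ℝ} {k : ℝ} {f g : (ι → ℝ) → ℝ}

noncomputable def dilate (r : ι → ℝ) (ε : ℝ) (x : ι → ℝ) : ι → ℝ := fun i => ε ^ r i * x i

def IsHomogeneous (r : ι → ℝ) (k : ℝ) (f : (ι → ℝ) → ℝ) : Prop :=
  ∀ ε : ℝ, 0 < ε → ∀ x, f (dilate r ε x) = ε ^ k * f x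

lemma dilate_one (x : ι → ℝ) : dilate r 1 x = x := by
  ext i; simp [dilate]

lemma dilate_dilate {ε δ : ℝ} (hε : 0 ≤ ε) (hδ : 0 ≤ δ) (x : ι → ℝ) :
    dilate r ε (dilate r δ x) = dilate r (ε * δ) x := by
  ext i; simp only [dilate, Real.mul_rpow hε hδ]; ring

namespace IsHomogeneous

lemma sub (hf : IsHomogeneous r k f) (hg : IsHomogeneous r k g) :
    IsHomogeneous r k (f - g) := fun ε hε x => by
  simp only [Pi.sub_apply, hf ε hε x, hg ε hε x]; ring

lemma const_mul (hf : IsHomogeneous r k f) (c : ℝ) : IsHomogeneous r k (fun x => c * f x) :=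
  fun ε hε x => by simp only [hf ε hε x]; ring

lemma apply_dilate_rpow_inv (hf : IsHomogeneous r k f) (hk : k ≠ 0) {t : ℝ} (ht : 0 < t)
    (x : ι → ℝ) : f (dilate r (t ^ k⁻¹) x) = t * f x := by
  rw [hf _ (Real.rpow_pos_of_pos ht _), Real.rpow_inv_rpow ht.le hk]

lemma mul_sub_mul_ne_zero (hf : IsHomogeneous r k f) (hg : IsHomogeneous r k g)
    (hk : k ≠ 0) (hcop : ∀ x, 0 ≤ g x → x ≠ 0 → 0 < f x) {a b : ℝ} (hab : 0 < a ^ 2 + b ^ 2)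
    (h₁ : ¬∃ x, f x = a ∧ g x = b) (h₂ : ¬∃ x, f x = -a ∧ g x = -b) {x : ι → ℝ} (hx : x ≠ 0) :
    b * f x - a * g x ≠ 0 := by
  intro h
  obtain ⟨t, hfx, hgx⟩ := exists_eq_mul_of_mul_sub_mul_eq_zero hab.ne' h
  rcases lt_trichotomy t 0 with ht | rfl | ht
  · have ht' : 0 < (-t)⁻¹ := inv_pos.mpr (neg_pos.mpr ht)
    refine h₂ ⟨dilate r ((-t)⁻¹ ^ k⁻¹) x, ?_, ?_⟩
    · rw [hf.apply_dilate_rpow_inv hk ht', hfx]; field_simp [ht.ne]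
    · rw [hg.apply_dilate_rpow_inv hk ht', hgx]; field_simp [ht.ne]
  · exact (hcop x (by simp [hgx]) hx).ne' (by simp [hfx])
  · refine h₁ ⟨dilate r (t⁻¹ ^ k⁻¹) x, ?_, ?_⟩
    · rw [hf.apply_dilate_rpow_inv hk (inv_pos.mpr ht), hfx]; field_simp
    · rw [hg.apply_dilate_rpow_inv hk (inv_pos.mpr ht), hgx]; field_simp

end IsHomogeneous

variable [Fintype ι]

noncomputable def gauge (r : ι → ℝ) (x : ι → ℝ) : ℝ := ∑ i, |x i| ^ (r i)⁻¹

lemma continuous_gauge (hr : ∀ i, 0 < r i) : Continuous (gauge r) :=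
  continuous_finsetSum _ fun i _ =>
    (continuous_apply i).abs.rpow_const fun _ => Or.inr (inv_pos.mpr (hr i)).le

lemma gauge_dilate (hr : ∀ i, 0 < r i) {ε : ℝ} (hε : 0 < ε) (x : ι → ℝ) :
    gauge r (dilate r ε x) = ε * gauge r x := by
  simp only [gauge, dilate, Finset.mul_sum]
  refine Finset.sum_congr rfl fun i _ => ?_
  have hεr := Real.rpow_pos_of_pos hε (r i)
  rw [abs_mul, abs_of_pos hεr, Real.mul_rpow hεr.le (abs_nonneg _), ← Real.rpow_mul hε.le,
    mul_inv_cancel₀ (hr i).ne', Real.rpow_one]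

lemma rpow_le_gauge (x : ι → ℝ) (i : ι) : |x i| ^ (r i)⁻¹ ≤ gauge r x :=
  Finset.single_le_sum (f := fun j => |x j| ^ (r j)⁻¹)
    (fun j _ => Real.rpow_nonneg (abs_nonneg (x j)) _) (Finset.mem_univ i)

lemma gauge_pos {x : ι → ℝ} (hx : x ≠ 0) : 0 < gauge r x := by
  obtain ⟨i, hi⟩ := Function.ne_iff.mp hx
  exact (Real.rpow_pos_of_pos (abs_pos.mpr hi) _).trans_le (rpow_le_gauge x i)

lemma ne_zero_of_gauge_eq_one (hr : ∀ i, 0 < r i) {x : ι → ℝ} (hx : gauge r x = 1) :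
    x ≠ 0 := by
  rintro rfl
  simp [gauge, Real.zero_rpow (inv_pos.mpr (hr _)).ne'] at hx

lemma isCompact_gauge_eq_one (hr : ∀ i, 0 < r i) : IsCompact {x : ι → ℝ | gauge r x = 1} := by
  refine (isCompact_Icc (a := -1) (b := 1)).of_isClosed_subset
    (isClosed_eq (continuous_gauge hr) continuous_const) fun x hx => ?_
  have habs : ∀ i, |x i| ≤ 1 := fun i => by
    by_contra! h
    have := (Real.one_lt_rpow h (inv_pos.mpr (hr i))).trans_le (rpow_le_gauge x i)
    exact this.ne' hx
  exact ⟨fun i => (abs_le.mp (habs i)).1, fun i => (abs_le.mp (habs i)).2⟩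

lemma exists_dilate_of_gauge_eq_one (hr : ∀ i, 0 < r i) {x : ι → ℝ} (hx : x ≠ 0) :
    ∃ ε > 0, ∃ y, gauge r y = 1 ∧ x = dilate r ε y := by
  have hN := gauge_pos (r := r) hx
  refine ⟨gauge r x, hN, dilate r (gauge r x)⁻¹ x, ?_, ?_⟩
  · rw [gauge_dilate hr (inv_pos.mpr hN), inv_mul_cancel₀ hN.ne']
  · rw [dilate_dilate hN.le (inv_pos.mpr hN).le, mul_inv_cancel₀ hN.ne', dilate_one]

lemma IsHomogeneous.pos_of_forall_gauge_eq_one (hr : ∀ i, 0 < r i) (hf : IsHomogeneous r k f)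
    (h : ∀ y, gauge r y = 1 → 0 < f y) {x : ι → ℝ} (hx : x ≠ 0) : 0 < f x := by
  obtain ⟨ε, hε, y, hy, rfl⟩ := exists_dilate_of_gauge_eq_one hr hx
  rw [hf ε hε y]
  exact mul_pos (Real.rpow_pos_of_pos hε k) (h y hy)

lemma exists_pos_forall_sub_mul_pos_of_pos (hr : ∀ i, 0 < r i) (hf : IsHomogeneous r k f)
    (hg : IsHomogeneous r k g) (hfc : Continuous f) (hgc : Continuous g)
    (hpos : ∀ x ≠ 0, 0 < f x) : ∃ ξ > 0, ∀ x ≠ 0, 0 < f x - ξ * g x := by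
  obtain ⟨ξ, hξ, hsphere⟩ := (isCompact_gauge_eq_one hr).exists_pos_forall_sub_mul_pos hfc hgc
    fun y hy => hpos y (ne_zero_of_gauge_eq_one hr hy)
  exact ⟨ξ, hξ, fun x => (hf.sub (hg.const_mul ξ)).pos_of_forall_gauge_eq_one hr hsphere⟩

lemma exists_pos_forall_sub_mul_pos_of_neg (hr : ∀ i, 0 < r i) (hf : IsHomogeneous r k f)
    (hg : IsHomogeneous r k g) (hfc : Continuous f) (hgc : Continuous g)
    (hneg : ∀ x ≠ 0, g x < 0) : ∃ ξ > 0, ∀ x ≠ 0, 0 < f x - ξ * g x := by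
  obtain ⟨η, hη, h⟩ := exists_pos_forall_sub_mul_pos_of_pos hr (hg.const_mul (-1))
    (hf.const_mul (-1)) (continuous_const.mul hgc) (continuous_const.mul hfc)
    fun x hx => by linarith [hneg x hx]
  refine ⟨η⁻¹, inv_pos.mpr hη, fun x hx => ?_⟩
  have hx' : f x - η⁻¹ * g x = η⁻¹ * (-1 * g x - η * (-1 * f x)) := by field_simp; ring
  rw [hx']
  exact mul_pos (inv_pos.mpr hη) (h x hx)

end Dilation

lemma exists_pos_forall_sub_mul_pos_of_mul_pos {α : Type*} [Zero α] {f g : α → ℝ} {a b : ℝ}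
    (hsign : ∀ x ≠ 0, ∀ y ≠ 0, 0 < (b * f x - a * g x) * (b * f y - a * g y)) {u v : α}
    (hu : u ≠ 0) (hfu : f u = 0) (hgu : g u < 0) (hv : v ≠ 0) (hgv : g v = 0) (hfv : 0 < f v) :
    ∃ ξ > 0, ∀ x ≠ 0, 0 < f x - ξ * g x := by
  have hab : 0 < a * b := by
    have huv := hsign u hu v hv
    rw [hfu, hgv] at huv
    nlinarith [mul_pos (neg_pos.mpr hgu) hfv]
  have hb : b ≠ 0 := by rintro rfl; simp at hab
  refine ⟨a / b, div_pos_iff.mpr (mul_pos_iff.mp hab), fun x hx => ?_⟩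
  have hxb : 0 < (b * f x - a * g x) * b := by
    have hxv := hsign x hx v hv
    rw [hgv] at hxv
    nlinarith
  have hx' : f x - a / b * g x = (b * f x - a * g x) * b / b ^ 2 := by field_simp
  rw [hx']
  exact div_pos hxb (by positivity)

theorem shs_lemma_nontrivial_direction (n : ℕ) (f g : (Fin n → ℝ) → ℝ)
    (r : Fin n → ℝ) (hr : ∀ i, 0 < r i) (k : ℝ) (hk : 0 < k)
    (hfc : Continuous f) (hgc : Continuous g)
    (hfeven : ∀ x : Fin n → ℝ, f (-x) = f x)
    (hgeven : ∀ x : Fin n → ℝ, g (-x) = g x)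
    (hfhom : ∀ ε : ℝ, 0 < ε → ∀ x : Fin n → ℝ,
      f (fun i => ε ^ (r i) * x i) = ε ^ k * f x)
    (hghom : ∀ ε : ℝ, 0 < ε → ∀ x : Fin n → ℝ,
      g (fun i => ε ^ (r i) * x i) = ε ^ k * g x)
    (hcop : ∀ x : Fin n → ℝ, g x ≥ 0 → x ≠ 0 → f x > 0)
    (hab : ∃ a b : ℝ, a ^ 2 + b ^ 2 > 0 ∧
      ¬ (∃ x : Fin n → ℝ, f x = a ∧ g x = b) ∧
      ¬ (∃ x : Fin n → ℝ, f x = -a ∧ g x = -b)) :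
    ∃ ξ : ℝ, 0 < ξ ∧ ∀ x : Fin n → ℝ, x ≠ 0 → f x - ξ * g x > 0 := by
  have hf : Dilation.IsHomogeneous r k f := hfhom
  have hg : Dilation.IsHomogeneous r k g := hghom
  obtain ⟨a, b, hab, h₁, h₂⟩ := hab
  by_cases hfpos : ∀ x ≠ 0, 0 < f x
  · exact Dilation.exists_pos_forall_sub_mul_pos_of_pos hr hf hg hfc hgc hfpos
  by_cases hgneg : ∀ x ≠ 0, g x < 0
  · exact Dilation.exists_pos_forall_sub_mul_pos_of_neg hr hf hg hfc hgc hgneg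
  push Not at hfpos hgneg
  obtain ⟨x₀, hx₀, hfx₀⟩ := hfpos
  obtain ⟨y₀, hy₀, hgy₀⟩ := hgneg
  have hneg_of_nonpos : ∀ x ≠ 0, f x ≤ 0 → g x < 0 := fun x hx hfx =>
    lt_of_not_ge fun hgx => (hcop x hgx hx).not_ge hfx
  obtain ⟨u, hu, hfu⟩ := exists_ne_zero_eq_zero_of_even hfc hfeven hx₀ hy₀ hfx₀
    (hcop y₀ hgy₀ hy₀).le
  obtain ⟨v, hv, hgv⟩ := exists_ne_zero_eq_zero_of_even hgc hgeven hx₀ hy₀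
    (hneg_of_nonpos x₀ hx₀ hfx₀).le hgy₀
  have hsign : ∀ x ≠ 0, ∀ y ≠ 0, 0 < (b * f x - a * g x) * (b * f y - a * g y) :=
    fun x hx y hy => mul_pos_of_even_of_ne_zero (by fun_prop)
      (fun z => by simp only [hfeven, hgeven])
      (fun z hz => hf.mul_sub_mul_ne_zero hg hk.ne' hcop hab h₁ h₂ hz) hx hy
  exact exists_pos_forall_sub_mul_pos_of_mul_pos hsign hu hfu (hneg_of_nonpos u hu hfu.le) hv hgv
    (hcop v hgv.ge hv)
end

section
/- Let f, g : ℝⁿ → ℝ be continuous even functions homogeneous of the same degree k > 0 with respect to the same dilation, such that f is strictly copositive with g. If for every (a,b) ∈ ℝ² with a² + b² > 0, either {f(x)=a, g(x)=b} or {f(x)=−a, g(x)=−b} has a solution, then there is no ξ > 0 such that f(x) − ξ·g(x) > 0 for all nonzero x. -/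
theorem shs_lemma_side_condition_necessary (n : ℕ) (f g : (Fin n → ℝ) → ℝ)
    (r : Fin n → ℝ) (hr : ∀ i, 0 < r i) (k : ℝ) (hk : 0 < k)
    (hfc : Continuous f) (hgc : Continuous g)
    (hfeven : ∀ x : Fin n → ℝ, f (-x) = f x)
    (hgeven : ∀ x : Fin n → ℝ, g (-x) = g x)
    (hfhom : ∀ ε : ℝ, 0 < ε → ∀ x : Fin n → ℝ,
      f (fun i => ε ^ (r i) * x i) = ε ^ k * f x)
    (hghom : ∀ ε : ℝ, 0 < ε → ∀ x : Fin n → ℝ,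
      g (fun i => ε ^ (r i) * x i) = ε ^ k * g x)
    (hcop : ∀ x : Fin n → ℝ, g x ≥ 0 → x ≠ 0 → f x > 0)
    (hab : ∀ a b : ℝ, a ^ 2 + b ^ 2 > 0 →
      (∃ x : Fin n → ℝ, f x = a ∧ g x = b) ∨
      (∃ x : Fin n → ℝ, f x = -a ∧ g x = -b)) :
    ¬ ∃ ξ : ℝ, 0 < ξ ∧ ∀ x : Fin n → ℝ, x ≠ 0 → f x - ξ * g x > 0 := by
  rintro ⟨ξ, hξ, hpos⟩
  -- f 0 = 0 by homogeneity
  have hf0 : f 0 = 0 := by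
    have h := hfhom 2 (by norm_num) 0
    have h2 : (fun i => (2:ℝ) ^ (r i) * (0:Fin n → ℝ) i) = (0 : Fin n → ℝ) := by
      funext i; simp
    rw [h2] at h
    have h2k : (1:ℝ) < 2 ^ k := by
      have := Real.one_lt_rpow_iff_of_pos (x := 2) (by norm_num) (y := k)
      exact this.mpr (Or.inl ⟨by norm_num, hk⟩)
    nlinarith
  have hab' := hab ξ 1 (by positivity)
  rcases hab' with ⟨x, hfx, hgx⟩ | ⟨x, hfx, hgx⟩
  · have hx : x ≠ 0 := by
      intro h; rw [h, hf0] at hfx; exact (ne_of_gt hξ) hfx.symm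
    have := hpos x hx
    rw [hfx, hgx] at this; linarith
  · have hx : x ≠ 0 := by
      intro h; rw [h, hf0] at hfx
      have : ξ = 0 := by linarith
      exact absurd this (ne_of_gt hξ)
    have := hpos x hx
    rw [hfx, hgx] at this; linarith
end

section
/- Let f, g : ℝⁿ → ℝ be homogeneous polynomials of odd degree k ≥ 1 with no common zero except 0 ∈ ℝⁿ. Then the set U = {(f(x), g(x)) : x ∈ ℝⁿ} is convex; in fact U either equals ℝ² or is a straight line through the origin. -/
open MvPolynomial

lemma aux_eval_smul {n k : ℕ} {p : MvPolynomial (Fin n) ℝ} (hp : p.IsHomogeneous k)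
    (c : ℝ) (x : Fin n → ℝ) : eval (c • x) p = c ^ k * eval x p := by
  rw [eval_eq, eval_eq, Finset.mul_sum]
  apply Finset.sum_congr rfl
  intro d hd
  have hdeg : ∑ i ∈ d.support, d i = k := by
    have := hp (mem_support_iff.mp hd)
    simpa [Finsupp.weight_apply, Finsupp.sum] using this
  have : ∏ i ∈ d.support, (c • x) i ^ d i
      = c ^ k * ∏ i ∈ d.support, x i ^ d i := by
    simp only [Pi.smul_apply, smul_eq_mul, mul_pow]
    rw [Finset.prod_mul_distrib, Finset.prod_pow_eq_pow_sum, hdeg]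
  rw [this]; ring

lemma aux_odd_root {k : ℕ} (hk : Odd k) (t : ℝ) : ∃ c : ℝ, c ^ k = t := by
  have hk0 : k ≠ 0 := by rintro rfl; simp at hk
  rcases le_total 0 t with h | h
  · exact ⟨t ^ ((k : ℝ)⁻¹), Real.rpow_inv_natCast_pow h hk0⟩
  · refine ⟨-((-t) ^ ((k : ℝ)⁻¹)), ?_⟩
    rw [hk.neg_pow, Real.rpow_inv_natCast_pow (by linarith) hk0, neg_neg]

lemma aux_exists_zero {n k : ℕ} (hn : 2 ≤ n) (hk : Odd k)
    (h : MvPolynomial (Fin n) ℝ) (hh : h.IsHomogeneous k) :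
    ∃ x : Fin n → ℝ, x ≠ 0 ∧ eval x h = 0 := by
  set i0 : Fin n := ⟨0, by omega⟩
  set i1 : Fin n := ⟨1, by omega⟩
  have hne : i0 ≠ i1 := by simp [i0, i1, Fin.ext_iff]
  set e1 : Fin n → ℝ := Pi.single i0 1 with he1
  set e2 : Fin n → ℝ := Pi.single i1 1 with he2
  by_cases h1 : eval e1 h = 0
  · refine ⟨e1, fun hc => ?_, h1⟩
    have : e1 i0 = 0 := by rw [hc]; rfl
    simp [he1] at this
  · set γ : ℝ → Fin n → ℝ := fun t i => (1 - 2*t) * e1 i + (t * (1-t)) * e2 i with hγ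
    set f : ℝ → ℝ := fun t => eval (γ t) h with hf
    have hcont : Continuous f := by
      apply (MvPolynomial.continuous_eval h).comp
      exact continuous_pi fun i => by fun_prop
    have hg0 : γ 0 = e1 := by funext i; show (1-2*0) * e1 i + (0*(1-0)) * e2 i = e1 i; ring
    have hf0 : f 0 = eval e1 h := by show eval (γ 0) h = eval e1 h; rw [hg0]
    have hf1 : f 1 = -eval e1 h := by
      have hg1 : γ 1 = (-1 : ℝ) • e1 := by
        funext i
        show (1-2*1) * e1 i + (1*(1-1)) * e2 i = -1 * e1 i
        ring
      show eval (γ 1) h = -eval e1 h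
      simp only [hg1, aux_eval_smul hh]
      rw [hk.neg_one_pow]; ring
    have hmem : (0 : ℝ) ∈ Set.uIcc (f 0) (f 1) := by
      rw [hf0, hf1, Set.mem_uIcc]
      rcases le_total 0 (eval e1 h) with hle | hle
      · right; constructor <;> linarith
      · left; constructor <;> linarith
    obtain ⟨t, ht, hft⟩ := intermediate_value_uIcc hcont.continuousOn hmem
    have ht0 : t ≠ 0 := by rintro rfl; rw [hft] at hf0; exact h1 hf0.symm
    have ht1 : t ≠ 1 := by
      rintro rfl; rw [hft] at hf1; exact h1 (by linarith [hf1.symm] : eval e1 h = 0)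
    rw [Set.uIcc_of_le (by norm_num : (0:ℝ) ≤ 1)] at ht
    have ht01 : 0 < t ∧ t < 1 :=
      ⟨lt_of_le_of_ne ht.1 (Ne.symm ht0), lt_of_le_of_ne ht.2 ht1⟩
    refine ⟨γ t, fun hc => ?_, hft⟩
    have : γ t i1 = 0 := by rw [hc]; rfl
    have he1i1 : e1 i1 = 0 := Pi.single_eq_of_ne (Ne.symm hne) 1
    have he2i1 : e2 i1 = 1 := Pi.single_eq_same i1 1
    rw [hγ] at this
    simp only [he1i1, he2i1, mul_zero, zero_add, mul_one] at this
    nlinarith [ht01.1, ht01.2]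

theorem odd_homogeneous_poly_image_convex (n : ℕ) (k : ℕ) (hk : 1 ≤ k)
    (hkodd : Odd k) (p q : MvPolynomial (Fin n) ℝ)
    (hp : p.IsHomogeneous k) (hq : q.IsHomogeneous k)
    (hzero : ∀ x : Fin n → ℝ,
      MvPolynomial.eval x p = 0 → MvPolynomial.eval x q = 0 → x = 0) :
    Convex ℝ {y : ℝ × ℝ | ∃ x : Fin n → ℝ,
        y = (MvPolynomial.eval x p, MvPolynomial.eval x q)} ∧
      ({y : ℝ × ℝ | ∃ x : Fin n → ℝ,
        y = (MvPolynomial.eval x p, MvPolynomial.eval x q)} = Set.univ ∨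
       ∃ a b : ℝ, {y : ℝ × ℝ | ∃ x : Fin n → ℝ,
         y = (MvPolynomial.eval x p, MvPolynomial.eval x q)} =
           {y : ℝ × ℝ | ∃ t : ℝ, y = (t * a, t * b)}) := by
  set S := {y : ℝ × ℝ | ∃ x : Fin n → ℝ,
      y = (MvPolynomial.eval x p, MvPolynomial.eval x q)} with hS
  have hk0 : k ≠ 0 := by omega
  have hp0 : eval (0 : Fin n → ℝ) p = 0 := by
    have h := aux_eval_smul hp 0 0
    rwa [smul_zero, zero_pow hk0, zero_mul] at h
  have hq0 : eval (0 : Fin n → ℝ) q = 0 := by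
    have h := aux_eval_smul hq 0 0
    rwa [smul_zero, zero_pow hk0, zero_mul] at h
  have hdisj : S = Set.univ ∨
      ∃ a b : ℝ, S = {y : ℝ × ℝ | ∃ t : ℝ, y = (t * a, t * b)} := by
    rcases lt_or_ge n 2 with hn | hn
    · right
      have hrep : ∀ x : Fin n → ℝ, ∃ c : ℝ, x = c • (fun _ => (1 : ℝ)) := by
        intro x
        match n, hn, x with
        | 0, _, x => exact ⟨0, funext fun i => i.elim0⟩
        | 1, _, x => exact ⟨x 0, funext fun i => by
            have hi : i = 0 := Subsingleton.elim i 0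
            simp [hi]⟩
      refine ⟨eval (fun _ => (1 : ℝ)) p, eval (fun _ => (1 : ℝ)) q, ?_⟩
      ext y
      constructor
      · rintro ⟨x, rfl⟩
        obtain ⟨c, rfl⟩ := hrep x
        exact ⟨c ^ k, by rw [aux_eval_smul hp, aux_eval_smul hq]⟩
      · rintro ⟨t, rfl⟩
        obtain ⟨c, hc⟩ := aux_odd_root hkodd t
        exact ⟨c • (fun _ => (1 : ℝ)),
          by rw [aux_eval_smul hp, aux_eval_smul hq, hc]⟩
    · left
      rw [Set.eq_univ_iff_forall]
      rintro ⟨a, b⟩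
      show ∃ x : Fin n → ℝ, ((a, b) : ℝ × ℝ) = (eval x p, eval x q)
      by_cases hab : a = 0 ∧ b = 0
      · rcases hab with ⟨rfl, rfl⟩
        exact ⟨0, by rw [hp0, hq0]⟩
      · have hhom : (MvPolynomial.C b * p - MvPolynomial.C a * q).IsHomogeneous k := by
          apply MvPolynomial.IsHomogeneous.sub
          · simpa using (MvPolynomial.isHomogeneous_C _ b).mul hp
          · simpa using (MvPolynomial.isHomogeneous_C _ a).mul hq
        obtain ⟨x₀, hx0, hx⟩ := aux_exists_zero hn hkodd _ hhom
        have hkey : b * eval x₀ p = a * eval x₀ q := by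
          simp only [map_sub, map_mul, eval_C] at hx
          linarith
        have hF : ¬(eval x₀ p = 0 ∧ eval x₀ q = 0) := by
          rintro ⟨h1, h2⟩; exact hx0 (hzero x₀ h1 h2)
        obtain ⟨μ, hμ, hpa, hqb⟩ :
            ∃ μ : ℝ, μ ≠ 0 ∧ eval x₀ p = μ * a ∧ eval x₀ q = μ * b := by
          by_cases ha : a = 0
          · have hb : b ≠ 0 := fun hb => hab ⟨ha, hb⟩
            have hpz : eval x₀ p = 0 := by
              have h2 : b * eval x₀ p = 0 := by rw [hkey, ha, zero_mul]
              exact (mul_eq_zero.mp h2).resolve_left hb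
            have hqz : eval x₀ q ≠ 0 := fun h => hF ⟨hpz, h⟩
            exact ⟨eval x₀ q / b, div_ne_zero hqz hb,
              by rw [ha, mul_zero, hpz], (div_mul_cancel₀ _ hb).symm⟩
          · have hpz : eval x₀ p ≠ 0 := by
              intro h0
              have h2 : a * eval x₀ q = 0 := by rw [← hkey, h0, mul_zero]
              exact hF ⟨h0, (mul_eq_zero.mp h2).resolve_left ha⟩
            refine ⟨eval x₀ p / a, div_ne_zero hpz ha,
              (div_mul_cancel₀ _ ha).symm, ?_⟩
            field_simp
            linarith [hkey]
        obtain ⟨c, hc⟩ := aux_odd_root hkodd μ⁻¹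
        refine ⟨c • x₀, ?_⟩
        rw [aux_eval_smul hp, aux_eval_smul hq, hc, hpa, hqb,
          inv_mul_cancel_left₀ hμ, inv_mul_cancel_left₀ hμ]
  refine ⟨?_, hdisj⟩
  rcases hdisj with h | ⟨a, b, h⟩
  · rw [h]; exact convex_univ
  · rw [h]
    rintro y1 ⟨t1, rfl⟩ y2 ⟨t2, rfl⟩ s t hs ht hst
    refine ⟨s * t1 + t * t2, ?_⟩
    simp only [Prod.smul_mk, smul_eq_mul, Prod.mk_add_mk, Prod.mk.injEq]
    constructor <;> ring
end

section
/- Let f, g : ℝⁿ → ℝ be homogeneous polynomials of degree k ≥ 1 with no common zero except 0. Suppose that there is at most one line through the origin of ℝ² contained in U = {(f(x), g(x)) : x ∈ ℝⁿ} (i.e., at most one (a,b) with a² + b² = 1 and a + δ(a)·b > 0, where δ(0)=1 and δ(t)=0 for t≠0, such that both (a,b) ∈ U and (−a,−b) ∈ U). If f is copositive with g (g(x) ≥ 0 implies f(x) ≥ 0), then there exists ξ ≥ 0 such that f(x) − ξ·g(x) ≥ 0 for all x ∈ ℝⁿ. -/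
open Real Set
open Complex (I arg slitPlane)

/-!
Put `F x = f x + i g x`. Copositivity and the absence of nontrivial common zeros keep `F x` off
the closed negative real axis for `x ≠ 0`, so `arg ∘ F` is continuous on `ℝⁿ \ {0}`. If
`f y / g y < f x / g x` for some `g x < 0 < g y`, then along the segment from `y` to `x` (which
misses `0` unless `y` is a multiple of `x`, when the two ratios agree by homogeneity) `arg F`
sweeps an interval longer than `π`. By homogeneity every unit vector with angle in that interval
is a value of `(f, g)`, which puts two distinct lines into `U`. Hence `f / g` on `{g < 0}` stays
below `f / g` on `{g > 0}`, which is nonnegative by copositivity, and `ξ` is the supremum of the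
former and `0`. That supremum is finite because `g` has no zero on the compact set of unit
vectors where `f ≤ 0` and `g ≤ 0`.
-/

def IsLineDirection {α : Type*} (f g : α → ℝ) (a b : ℝ) : Prop :=
  a ^ 2 + b ^ 2 = 1 ∧ (if a = 0 then 0 < b else 0 < a) ∧
    (∃ x, f x = a ∧ g x = b) ∧ (∃ x, f x = -a ∧ g x = -b)

theorem MvPolynomial.IsHomogeneous.eval_smul {σ R : Type*} [CommSemiring R]
    {p : MvPolynomial σ R} {k : ℕ} (hp : p.IsHomogeneous k) (c : R) (x : σ → R) :
    MvPolynomial.eval (c • x) p = c ^ k * MvPolynomial.eval x p := by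
  rw [MvPolynomial.eval_eq, MvPolynomial.eval_eq, Finset.mul_sum]
  refine Finset.sum_congr rfl fun d hd => ?_
  have hw : ∑ i ∈ d.support, d i = k := by
    simpa [Finsupp.weight, Finsupp.linearCombination, Finsupp.sum] using
      hp (MvPolynomial.mem_support_iff.mp hd)
  simp only [Pi.smul_apply, smul_eq_mul, mul_pow, Finset.prod_mul_distrib,
    Finset.prod_pow_eq_pow_sum, hw]
  ring

section Lines

variable {α : Type*} {f g : α → ℝ}

theorem isLineDirection_or_isLineDirection_neg {a b : ℝ} (hab : a ^ 2 + b ^ 2 = 1)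
    (h : ∃ x, f x = a ∧ g x = b) (h' : ∃ x, f x = -a ∧ g x = -b) :
    IsLineDirection f g a b ∨ IsLineDirection f g (-a) (-b) := by
  by_cases hpos : if a = 0 then 0 < b else 0 < a
  · exact Or.inl ⟨hab, hpos, h, h'⟩
  refine Or.inr ⟨by rwa [neg_sq, neg_sq], ?_, h', by simpa only [neg_neg] using h⟩
  rcases eq_or_ne a 0 with rfl | ha
  · have hb : b ≠ 0 := by rintro rfl; norm_num at hab
    simp only [neg_zero, if_true, not_lt] at hpos ⊢
    exact neg_pos.2 (lt_of_le_of_ne hpos hb)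
  · simp only [ha, neg_eq_zero, if_false, not_lt] at hpos ⊢
    exact neg_pos.2 (lt_of_le_of_ne hpos ha)

theorem sin_sub_eq_zero_of_isLineDirection_unique
    (hline : ∀ a b a' b', IsLineDirection f g a b → IsLineDirection f g a' b' → a = a' ∧ b = b')
    {φ ψ : ℝ} (hφ : ∃ x, f x = cos φ ∧ g x = sin φ) (hφ' : ∃ x, f x = -cos φ ∧ g x = -sin φ)
    (hψ : ∃ x, f x = cos ψ ∧ g x = sin ψ) (hψ' : ∃ x, f x = -cos ψ ∧ g x = -sin ψ) :
    sin (φ - ψ) = 0 := by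
  rw [sin_sub]
  rcases isLineDirection_or_isLineDirection_neg (cos_sq_add_sin_sq φ) hφ hφ' with h₁ | h₁ <;>
  rcases isLineDirection_or_isLineDirection_neg (cos_sq_add_sin_sq ψ) hψ hψ' with h₂ | h₂ <;>
  obtain ⟨hc, hs⟩ := hline _ _ _ _ h₁ h₂ <;> grind

theorem sub_le_pi_of_isLineDirection_unique
    (hline : ∀ a b a' b', IsLineDirection f g a b → IsLineDirection f g a' b' → a = a' ∧ b = b')
    {a b : ℝ} (hab : ∀ φ ∈ Icc a b, ∃ x, f x = cos φ ∧ g x = sin φ) : b - a ≤ π := by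
  by_contra! hπ
  -- the lines at angles `a` and `a + δ` are distinct, and both lie in `U`
  set δ := min (b - a - π) (π / 2)
  have hδ : 0 < δ := lt_min (by linarith) (by positivity)
  have hδ₁ : δ ≤ b - a - π := min_le_left _ _
  have hδ₂ : δ ≤ π / 2 := min_le_right _ _
  have hline_at : ∀ φ, a ≤ φ → φ + π ≤ b →
      (∃ x, f x = cos φ ∧ g x = sin φ) ∧ ∃ x, f x = -cos φ ∧ g x = -sin φ := fun φ h₁ h₂ =>
    ⟨hab φ ⟨h₁, by linarith [pi_pos]⟩,
      by simpa only [cos_add_pi, sin_add_pi] using hab (φ + π) ⟨by linarith [pi_pos], h₂⟩⟩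
  obtain ⟨h₁, h₁'⟩ := hline_at a le_rfl (by linarith)
  obtain ⟨h₂, h₂'⟩ := hline_at (a + δ) (by linarith) (by linarith)
  have hsin := sin_sub_eq_zero_of_isLineDirection_unique hline h₂ h₂' h₁ h₁'
  rw [add_sub_cancel_left] at hsin
  exact (sin_pos_of_pos_of_lt_pi hδ (by linarith [pi_pos])).ne' hsin

end Lines

theorem Complex.sin_arg_sub_arg {z w : ℂ} (hz : z ≠ 0) (hw : w ≠ 0) :
    Real.sin (arg z - arg w) = (z.im * w.re - z.re * w.im) / (‖z‖ * ‖w‖) := by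
  rw [Real.sin_sub, Complex.sin_arg, Complex.sin_arg, Complex.cos_arg hz, Complex.cos_arg hw]
  field_simp

theorem mem_slitPlane_of_copositive {α : Type*} [Zero α] {f g : α → ℝ}
    (hzero : ∀ x, f x = 0 → g x = 0 → x = 0)
    (hcop : ∀ x, g x ≥ 0 → f x ≥ 0) {x : α} (hx : x ≠ 0) : (f x + g x * I : ℂ) ∈ slitPlane := by
  by_cases hg : g x = 0
  · refine Complex.mem_slitPlane_iff.2 (Or.inl ?_)
    simpa using lt_of_le_of_ne (hcop x hg.ge) fun hf => hx (hzero x hf.symm hg)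
  · exact Complex.mem_slitPlane_iff.2 (Or.inr (by simpa using hg))

section Homogeneous

variable {E : Type*} [AddCommGroup E] [Module ℝ E] {f g : E → ℝ} {k : ℕ}

theorem apply_zero_of_homogeneous (hk : k ≠ 0) (hfk : ∀ (c : ℝ) x, f (c • x) = c ^ k * f x) :
    f 0 = 0 := by
  simpa [hk] using hfk 0 0

theorem exists_eq_cos_sin_arg (hk : k ≠ 0) (hfk : ∀ (c : ℝ) x, f (c • x) = c ^ k * f x)
    (hgk : ∀ (c : ℝ) x, g (c • x) = c ^ k * g x) {x : E} (hx : (f x + g x * I : ℂ) ≠ 0) :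
    ∃ w, f w = cos (arg (f x + g x * I)) ∧ g w = sin (arg (f x + g x * I)) := by
  set r := ‖(f x + g x * I : ℂ)‖
  have hc : (r⁻¹ ^ (k⁻¹ : ℝ)) ^ k = r⁻¹ := rpow_inv_natCast_pow (by positivity) hk
  refine ⟨(r⁻¹ ^ (k⁻¹ : ℝ)) • x, ?_, ?_⟩
  · rw [hfk, hc, Complex.cos_arg hx, div_eq_inv_mul]; simp [r]
  · rw [hgk, hc, Complex.sin_arg, div_eq_inv_mul]; simp [r]

theorem lineMap_ne_zero_of_forall_ne_smul {x y : E} (hx : x ≠ 0) (hxy : ∀ c : ℝ, y ≠ c • x)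
    (s : ℝ) : AffineMap.lineMap y x s ≠ 0 := by
  rw [AffineMap.lineMap_apply_module]
  intro h
  have hs : 1 - s ≠ 0 := by
    intro hs
    rw [hs, zero_smul, zero_add, show s = 1 by linarith, one_smul] at h
    exact hx h
  apply hxy (-(s / (1 - s)))
  rw [add_eq_zero_iff_eq_neg] at h
  calc y = (1 - s)⁻¹ • ((1 - s) • y) := (inv_smul_smul₀ hs y).symm
    _ = -(s / (1 - s)) • x := by rw [h, smul_neg, smul_smul, neg_smul, div_eq_inv_mul]

end Homogeneous

section Normed

variable {E : Type*} [NormedAddCommGroup E] [NormedSpace ℝ E] {f g : E → ℝ} {k : ℕ}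

theorem exists_eq_cos_sin_of_mem_uIcc_arg (hk : k ≠ 0) (hfc : Continuous f) (hgc : Continuous g)
    (hfk : ∀ (c : ℝ) x, f (c • x) = c ^ k * f x) (hgk : ∀ (c : ℝ) x, g (c • x) = c ^ k * g x)
    (hzero : ∀ x, f x = 0 → g x = 0 → x = 0) (hcop : ∀ x, g x ≥ 0 → f x ≥ 0)
    {γ : ℝ → E} (hγc : Continuous γ) (hγ : ∀ s, γ s ≠ 0) {φ : ℝ}
    (hφ : φ ∈ uIcc (arg (f (γ 0) + g (γ 0) * I)) (arg (f (γ 1) + g (γ 1) * I))) :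
    ∃ w, f w = cos φ ∧ g w = sin φ := by
  have hslit s := mem_slitPlane_of_copositive hzero hcop (hγ s)
  have hW : Continuous fun s => (f (γ s) + g (γ s) * I : ℂ) := by fun_prop
  have hθ : Continuous fun s => arg (f (γ s) + g (γ s) * I) :=
    continuous_iff_continuousAt.2 fun s =>
      (Complex.continuousAt_arg (hslit s)).comp (f := fun s => (f (γ s) + g (γ s) * I : ℂ))
        hW.continuousAt
  obtain ⟨s, -, rfl⟩ := intermediate_value_uIcc (a := 0) (b := 1) hθ.continuousOn hφ
  exact exists_eq_cos_sin_arg hk hfk hgk (Complex.slitPlane_ne_zero (hslit s))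

theorem div_le_div_of_isLineDirection_unique (hk : k ≠ 0) (hfc : Continuous f)
    (hgc : Continuous g) (hfk : ∀ (c : ℝ) x, f (c • x) = c ^ k * f x)
    (hgk : ∀ (c : ℝ) x, g (c • x) = c ^ k * g x) (hzero : ∀ x, f x = 0 → g x = 0 → x = 0)
    (hcop : ∀ x, g x ≥ 0 → f x ≥ 0)
    (hline : ∀ a b a' b', IsLineDirection f g a b → IsLineDirection f g a' b' → a = a' ∧ b = b')
    {x y : E} (hx : g x < 0) (hy : 0 < g y) : f x / g x ≤ f y / g y := by
  by_cases hxy : ∃ c : ℝ, y = c • x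
  · obtain ⟨c, rfl⟩ := hxy
    have hc : c ^ k ≠ 0 := fun hc => by rw [hgk, hc, zero_mul] at hy; exact hy.false
    rw [hfk, hgk, mul_div_mul_left _ _ hc]
  simp only [not_exists] at hxy
  by_contra! hlt
  have hx0 : x ≠ 0 := ne_of_apply_ne g (by rw [apply_zero_of_homogeneous hk hgk]; exact hx.ne)
  have hy0 : y ≠ 0 := ne_of_apply_ne g (by rw [apply_zero_of_homogeneous hk hgk]; exact hy.ne')
  have hWx := Complex.slitPlane_ne_zero (mem_slitPlane_of_copositive hzero hcop hx0)
  have hWy := Complex.slitPlane_ne_zero (mem_slitPlane_of_copositive hzero hcop hy0)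
  set θx := arg (f x + g x * I)
  set θy := arg (f y + g y * I)
  have hθx : θx < 0 := Complex.arg_neg_iff.2 (by simpa using hx)
  have hθy : 0 ≤ θy := Complex.arg_nonneg_iff.2 (by simpa using hy.le)
  have hsin : 0 < sin (θx - θy) := by
    rw [div_lt_iff₀ hy, div_mul_eq_mul_div, lt_div_iff_of_neg hx] at hlt
    rw [Complex.sin_arg_sub_arg hWx hWy]
    exact div_pos (by simpa [mul_comm (g x)] using hlt)
      (mul_pos (norm_pos_iff.2 hWx) (norm_pos_iff.2 hWy))
  have hwide : π < θy - θx := by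
    by_contra! h
    exact hsin.not_ge (sin_nonpos_of_nonpos_of_neg_pi_le (by linarith) (by linarith))
  have hnarrow : θy - θx ≤ π := sub_le_pi_of_isLineDirection_unique hline fun φ hφ =>
    exists_eq_cos_sin_of_mem_uIcc_arg hk hfc hgc hfk hgk hzero hcop
      (γ := AffineMap.lineMap y x) AffineMap.lineMap_continuous
      (lineMap_ne_zero_of_forall_ne_smul hx0 hxy)
      (by rwa [AffineMap.lineMap_apply_zero, AffineMap.lineMap_apply_one,
        uIcc_of_ge (hθx.le.trans hθy)])
  linarith

theorem bddAbove_div_image_neg [ProperSpace E] (hk : k ≠ 0) (hfc : Continuous f)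
    (hgc : Continuous g) (hfk : ∀ (c : ℝ) x, f (c • x) = c ^ k * f x)
    (hgk : ∀ (c : ℝ) x, g (c • x) = c ^ k * g x) (hzero : ∀ x, f x = 0 → g x = 0 → x = 0)
    (hcop : ∀ x, g x ≥ 0 → f x ≥ 0) :
    BddAbove ((fun x => f x / g x) '' {x | g x < 0}) := by
  set K := Metric.sphere (0 : E) 1 ∩ {x | f x ≤ 0} ∩ {x | g x ≤ 0}
  have hK : IsCompact K := ((isCompact_sphere 0 1).inter_right
    (isClosed_le hfc continuous_const)).inter_right (isClosed_le hgc continuous_const)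
  have hgK : ∀ x ∈ K, g x ≠ 0 := by
    rintro x ⟨⟨hx, hfx⟩, -⟩ hgx
    rw [hzero x (le_antisymm hfx (hcop x hgx.ge)) hgx] at hx
    simp at hx
  obtain ⟨M, hM⟩ := hK.bddAbove_image (hfc.continuousOn.div hgc.continuousOn hgK)
  refine ⟨max 0 M, ?_⟩
  rintro _ ⟨x, hx : g x < 0, rfl⟩
  rcases lt_or_ge 0 (f x) with hfx | hfx
  · exact le_max_of_le_left (div_neg_of_pos_of_neg hfx hx).le
  have hx0 : x ≠ 0 := ne_of_apply_ne g (by rw [apply_zero_of_homogeneous hk hgk]; exact hx.ne)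
  have hc : 0 < ‖x‖⁻¹ ^ k := by positivity
  have hu : ‖x‖⁻¹ • x ∈ K := by
    refine ⟨⟨mem_sphere_zero_iff_norm.2 (norm_smul_inv_norm hx0), ?_⟩, ?_⟩
    · show f _ ≤ 0
      rw [hfk]; exact mul_nonpos_of_nonneg_of_nonpos hc.le hfx
    · show g _ ≤ 0
      rw [hgk]; exact mul_nonpos_of_nonneg_of_nonpos hc.le hx.le
  calc f x / g x = f (‖x‖⁻¹ • x) / g (‖x‖⁻¹ • x) := by
        rw [hfk, hgk, mul_div_mul_left _ _ hc.ne']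
    _ ≤ M := hM ⟨_, hu, rfl⟩
    _ ≤ max 0 M := le_max_right _ _

end Normed

theorem exists_nonneg_mul_le_of_div_le_div {α : Type*} {f g : α → ℝ}
    (hcop : ∀ x, g x ≥ 0 → f x ≥ 0)
    (hdiv : ∀ x y, g x < 0 → 0 < g y → f x / g x ≤ f y / g y)
    (hbdd : BddAbove ((fun x => f x / g x) '' {x | g x < 0})) :
    ∃ ξ : ℝ, 0 ≤ ξ ∧ ∀ x, ξ * g x ≤ f x := by
  set S := insert 0 ((fun x => f x / g x) '' {x | g x < 0})
  have hS : BddAbove S := hbdd.insert 0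
  refine ⟨sSup S, le_csSup hS (mem_insert 0 _), fun x => ?_⟩
  rcases lt_trichotomy (g x) 0 with hx | hx | hx
  · rw [← div_le_iff_of_neg hx]
    exact le_csSup hS (mem_insert_of_mem 0 ⟨x, hx, rfl⟩)
  · simpa [hx] using hcop x hx.ge
  · rw [← le_div_iff₀ hx]
    refine csSup_le (insert_nonempty _ _) ?_
    rintro _ (rfl | ⟨y, hy : g y < 0, rfl⟩)
    · exact div_nonneg (hcop x hx.le) hx.le
    · exact hdiv y x hy hx

theorem hs_lemma (n : ℕ) (k : ℕ) (hk : 1 ≤ k)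
    (p q : MvPolynomial (Fin n) ℝ)
    (hp : p.IsHomogeneous k) (hq : q.IsHomogeneous k)
    (f g : (Fin n → ℝ) → ℝ)
    (hf : ∀ x, f x = MvPolynomial.eval x p)
    (hg : ∀ x, g x = MvPolynomial.eval x q)
    (hzero : ∀ x : Fin n → ℝ, f x = 0 → g x = 0 → x = 0)
    (hline : ∀ a b a' b' : ℝ,
      (a ^ 2 + b ^ 2 = 1 ∧ (if a = 0 then 0 < b else 0 < a) ∧
        (∃ x, f x = a ∧ g x = b) ∧ (∃ x, f x = -a ∧ g x = -b)) →
      (a' ^ 2 + b' ^ 2 = 1 ∧ (if a' = 0 then 0 < b' else 0 < a') ∧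
        (∃ x, f x = a' ∧ g x = b') ∧ (∃ x, f x = -a' ∧ g x = -b')) →
      a = a' ∧ b = b')
    (hcop : ∀ x : Fin n → ℝ, g x ≥ 0 → f x ≥ 0) :
    ∃ ξ : ℝ, 0 ≤ ξ ∧ ∀ x : Fin n → ℝ, f x - ξ * g x ≥ 0 := by
  have hk0 : k ≠ 0 := Nat.one_le_iff_ne_zero.1 hk
  have hfk : ∀ (c : ℝ) x, f (c • x) = c ^ k * f x := fun c x => by rw [hf, hf, hp.eval_smul]
  have hgk : ∀ (c : ℝ) x, g (c • x) = c ^ k * g x := fun c x => by rw [hg, hg, hq.eval_smul]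
  have hfc : Continuous f := by rw [funext hf]; exact MvPolynomial.continuous_eval p
  have hgc : Continuous g := by rw [funext hg]; exact MvPolynomial.continuous_eval q
  obtain ⟨ξ, hξ, hle⟩ := exists_nonneg_mul_le_of_div_le_div hcop
    (fun x y => div_le_div_of_isLineDirection_unique hk0 hfc hgc hfk hgk hzero hcop hline)
    (bddAbove_div_image_neg hk0 hfc hgc hfk hgk hzero hcop)
  exact ⟨ξ, hξ, fun x => sub_nonneg.2 (hle x)⟩
end

section
/- Let f(x,y) = −x³ + y³ and g(x,y) = y³ − x³/2 − x·y²/2. Then f is copositive with g (g(x,y) ≥ 0 implies f(x,y) ≥ 0), but there is no ξ ≥ 0 such that f(x,y) − ξ·g(x,y) ≥ 0 for all (x,y) ∈ ℝ². -/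
theorem cubic_copositive_no_multiplier :
    (∀ x y : ℝ, y ^ 3 - x ^ 3 / 2 - x * y ^ 2 / 2 ≥ 0 → -x ^ 3 + y ^ 3 ≥ 0) ∧
    ¬ ∃ ξ : ℝ, ξ ≥ 0 ∧ ∀ x y : ℝ,
      (-x ^ 3 + y ^ 3) - ξ * (y ^ 3 - x ^ 3 / 2 - x * y ^ 2 / 2) ≥ 0 := by
  constructor
  · intro x y hg
    have hxy : x ≤ y := by
      by_contra h'
      push_neg at h'
      have hd : 0 < x - y := by linarith
      nlinarith [mul_pos hd (mul_pos hd hd), mul_nonneg hd.le (sq_nonneg (3*x + 7*y)),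
        mul_nonneg hd.le (sq_nonneg (x + y)), mul_nonneg hd.le (sq_nonneg y)]
    have hd : 0 ≤ y - x := by linarith
    nlinarith [mul_nonneg hd (sq_nonneg (2*x + y)), mul_nonneg hd (sq_nonneg y),
      mul_nonneg hd (sq_nonneg (x + y))]
  · rintro ⟨ξ, hξ, h⟩
    have h1 := h 1 2
    have h2 := h 2 1
    norm_num at h1 h2
    linarith
end

section
/- For every λ with 1/5 < λ < 37/93, the function Ẇ(x₁,x₂) = (12λ−5)x₁⁶ + (3λ−1)x₁³x₂³ + (1−6λ)x₂⁶ + (3λ−1)x₁⁴x₂² is negative definite on ℝ², i.e., Ẇ(x₁,x₂) < 0 for all (x₁,x₂) ≠ (0,0). -/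
theorem convex_combination_negative_definite (lam : ℝ)
    (hl : 1 / 5 < lam) (hu : lam < 37 / 93) :
    ∀ x₁ x₂ : ℝ, (x₁, x₂) ≠ (0, 0) →
      (12 * lam - 5) * x₁ ^ 6 + (3 * lam - 1) * x₁ ^ 3 * x₂ ^ 3
        + (1 - 6 * lam) * x₂ ^ 6 + (3 * lam - 1) * x₁ ^ 4 * x₂ ^ 2 < 0 := by
  intro x₁ x₂ hx
  have h6 : 0 < x₁ ^ 6 + x₂ ^ 6 := by
    rcases (not_and_or.mp (fun h => hx (Prod.ext h.1 h.2))) with h | h <;> positivity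
  rcases le_or_gt (3 * lam) 1 with hb | hb
  · have hb' : (0:ℝ) ≤ 1 - 3 * lam := by linarith
    nlinarith [mul_nonneg hb' (sq_nonneg (x₁ ^ 3 + x₂ ^ 3)),
      mul_nonneg hb' (mul_nonneg (pow_nonneg (sq_nonneg x₁) 2) (sq_nonneg x₂)),
      mul_nonneg (by linarith : (0:ℝ) ≤ lam - 1 / 5) (pow_nonneg (sq_nonneg x₂) 3),
      mul_nonneg (by linarith : (0:ℝ) ≤ 37 / 93 - lam) (pow_nonneg (sq_nonneg x₁) 3)]
  · have hb' : (0:ℝ) ≤ 3 * lam - 1 := by linarith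
    nlinarith [mul_nonneg hb' (sq_nonneg (x₁ ^ 3 - x₂ ^ 3)),
      mul_nonneg hb' (mul_nonneg (sq_nonneg (x₁ ^ 2 - x₂ ^ 2))
        (by positivity : (0:ℝ) ≤ 2 * x₁ ^ 2 + x₂ ^ 2)),
      mul_nonneg (by linarith : (0:ℝ) ≤ lam - 1 / 5) (pow_nonneg (sq_nonneg x₂) 3),
      mul_nonneg (by linarith : (0:ℝ) ≤ 37 / 93 - lam) (pow_nonneg (sq_nonneg x₁) 3)]
end
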